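/- Let N be a finite-dimensional Ŷ_{r,n}^K-module and μ ∈ C_r(n). The evaluation map Ψ : V(μ) ⊗ Hom_{KT}(V(μ), I_μN) → I_μN, v⊗ψ ↦ ψ(v), is an isomorphism of Ŷ_{r,μ}^K-modules, where the source carries the Ŷ_{r,μ}^K-module structure t_j ∗ (v_μ⊗ψ) = t_j(v_μ)⊗ψ, g_w ∗ (v_μ⊗ψ) = v_μ⊗(T_w ⋄ ψ) for w ∈ S_μ, X_j^{±1} ∗ (v_μ⊗ψ) = v_μ⊗(Y_j^{±1} ⋄ ψ). -/

import Mathlib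

/- Common setup: the affine Yokonuma-Hecke algebra presented by generators and
relations, reduced words, Bruhat order, affine Hecke algebras (of tensor-product
type), isotypic components and induced modules. -/

set_option maxHeartbeats 1000000

open scoped TensorProduct

noncomputable section

namespace YH

/-- Generators of the affine Yokonuma-Hecke algebra: `t j` for `j : Fin n`,
`g i` (for `i` with `i+1 < n`, representing the transposition `(i, i+1)` in
0-based indexing), and `X1`, `X1inv` (the generator `X_1` and its inverse). -/
inductive YGen (n : ℕ) : Type
  | t (j : Fin n) : YGen n
  | g (i : ℕ) (h : i + 1 < n) : YGen n
  | X1 : YGen n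
  | X1inv : YGen n

variable (K : Type) [Field K] (r n : ℕ) (q : K)

/-- The free algebra on the generators. -/
abbrev FY := FreeAlgebra K (YGen n)

def tF (j : Fin n) : FY K n := FreeAlgebra.ι K (YGen.t j)
def gF (i : ℕ) (h : i + 1 < n) : FY K n := FreeAlgebra.ι K (YGen.g i h)
def X1F : FY K n := FreeAlgebra.ι K YGen.X1
def X1invF : FY K n := FreeAlgebra.ι K YGen.X1inv

/-- The idempotent `e_i = (1/r) ∑_{s=0}^{r-1} t_i^s t_{i+1}^{-s}` (as an element
of the free algebra, with `t_{i+1}^{-s}` written as `t_{i+1}^{(r-s) % r}`,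
using `t^r = 1`). -/
def eF (i : ℕ) (h : i + 1 < n) : FY K n :=
  (r : K)⁻¹ • ∑ s ∈ Finset.range r,
    tF K n ⟨i, by omega⟩ ^ s * tF K n ⟨i + 1, h⟩ ^ ((r - s) % r)

/-- The simple transposition `s_i = (i, i+1)` of `Fin n` (0-based). -/
def swapi (i : ℕ) (h : i + 1 < n) : Equiv.Perm (Fin n) :=
  Equiv.swap ⟨i, by omega⟩ ⟨i + 1, h⟩

/-- Defining relations of the affine Yokonuma-Hecke algebra `Ŷ_{r,n}(q)` over `K`. -/
inductive YRel : FY K n → FY K n → Prop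
  | gg {i j : ℕ} (hi : i + 1 < n) (hj : j + 1 < n) (hij : i + 2 ≤ j ∨ j + 2 ≤ i) :
      YRel (gF K n i hi * gF K n j hj) (gF K n j hj * gF K n i hi)
  | braid {i : ℕ} (h : i + 2 < n) :
      YRel (gF K n i (by omega) * gF K n (i + 1) h * gF K n i (by omega))
        (gF K n (i + 1) h * gF K n i (by omega) * gF K n (i + 1) h)
  | tt (i j : Fin n) : YRel (tF K n i * tF K n j) (tF K n j * tF K n i)
  | gt {i : ℕ} (hi : i + 1 < n) (j : Fin n) :
      YRel (gF K n i hi * tF K n j) (tF K n (swapi n i hi j) * gF K n i hi)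
  | tr (j : Fin n) : YRel (tF K n j ^ r) 1
  | gsq {i : ℕ} (hi : i + 1 < n) :
      YRel (gF K n i hi * gF K n i hi)
        (1 + (q - q⁻¹) • (eF K r n i hi * gF K n i hi))
  | XXinv : YRel (X1F K n * X1invF K n) 1
  | XinvX : YRel (X1invF K n * X1F K n) 1
  | gXgX (h : 1 < n) :
      YRel (gF K n 0 (by omega) * X1F K n * gF K n 0 (by omega) * X1F K n)
        (X1F K n * gF K n 0 (by omega) * X1F K n * gF K n 0 (by omega))
  | gX {i : ℕ} (hi : i + 1 < n) (h1 : 1 ≤ i) :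
      YRel (gF K n i hi * X1F K n) (X1F K n * gF K n i hi)
  | tX (j : Fin n) : YRel (tF K n j * X1F K n) (X1F K n * tF K n j)

/-- The affine Yokonuma-Hecke algebra `Ŷ_{r,n}^K`. -/
abbrev Y := RingQuot (YRel K r n q)

def mkY : FY K n →ₐ[K] Y K r n q := RingQuot.mkAlgHom K (YRel K r n q)

/-- The generator `t_j` (0-based `j`). -/
def t (j : Fin n) : Y K r n q := mkY K r n q (tF K n j)
/-- The generator `g_i` (0-based `i`, `i+1 < n`). -/
def g (i : ℕ) (h : i + 1 < n) : Y K r n q := mkY K r n q (gF K n i h)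
/-- The idempotent `e_i`. -/
def e (i : ℕ) (h : i + 1 < n) : Y K r n q := mkY K r n q (eF K r n i h)
def X1 : Y K r n q := mkY K r n q (X1F K n)
def X1inv : Y K r n q := mkY K r n q (X1invF K n)

/-- `X_{i+1} := g_i X_i g_i`, recursively. -/
def Xrec : (k : ℕ) → k < n → Y K r n q
  | 0, _ => X1 K r n q
  | k + 1, h => g K r n q k (by omega) * Xrec k (by omega) * g K r n q k (by omega)

/-- The commuting elements `X_j` (0-based `j`). -/
def X (j : Fin n) : Y K r n q := Xrec K r n q j.1 j.2

/-! ### Words and reduced expressions -/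

/-- A word in the simple transpositions. -/
abbrev Word := List {i : ℕ // i + 1 < n}

/-- The permutation represented by a word. -/
def permOfWord (l : Word n) : Equiv.Perm (Fin n) :=
  (l.map fun i => swapi n i.1 i.2).prod

/-- `l` is a reduced word for `w`. -/
def IsReducedWord (l : Word n) (w : Equiv.Perm (Fin n)) : Prop :=
  permOfWord n l = w ∧ ∀ l' : Word n, permOfWord n l' = w → l.length ≤ l'.length

/-- The product `g_{i_1} ⋯ g_{i_k}` along a word. -/
def gword (l : Word n) : Y K r n q := (l.map fun i => g K r n q i.1 i.2).prod

/-- `gw` is the family `w ↦ g_w`, i.e. `g_w` is the product of the `g_i` along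
any reduced expression of `w` (well defined by Matsumoto's lemma). -/
def GwSpec (gw : Equiv.Perm (Fin n) → Y K r n q) : Prop :=
  ∀ (w : Equiv.Perm (Fin n)) (l : Word n), IsReducedWord n l w → gw w = gword K r n q l

/-- Bruhat order: `u ≤ w` iff some reduced word of `w` has a subword which is a
reduced word of `u`. -/
def BruhatLE (u w : Equiv.Perm (Fin n)) : Prop :=
  ∃ l : Word n, IsReducedWord n l w ∧ ∃ l' : Word n, l'.Sublist l ∧ IsReducedWord n l' u

def BruhatLT (u w : Equiv.Perm (Fin n)) : Prop := BruhatLE n u w ∧ u ≠ w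

/-! ### Monomials and distinguished subalgebras -/

/-- `XU` is a family of units lifting the commuting elements `X_j` (each `X_j`
is invertible in `Ŷ_{r,n}^K`). -/
def XUSpec (XU : Fin n → (Y K r n q)ˣ) : Prop :=
  ∀ j, (XU j : Y K r n q) = X K r n q j

/-- The monomial `X^α = X_1^{α_1} ⋯ X_n^{α_n}`, `α ∈ ℤ^n`. -/
def Xpow (XU : Fin n → (Y K r n q)ˣ) (α : Fin n → ℤ) : Y K r n q :=
  ((List.finRange n).map fun j => ((XU j ^ α j : (Y K r n q)ˣ) : Y K r n q)).prod

/-- The monomial `t^β = t_1^{β_1} ⋯ t_n^{β_n}`, `β ∈ (ℤ/rℤ)^n`. -/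
def tpow (β : Fin n → ZMod r) : Y K r n q :=
  ((List.finRange n).map fun j => t K r n q j ^ (β j).val).prod

/-- The subalgebra `KT` generated by `t_1, …, t_n` (the group algebra of
`T = (ℤ/rℤ)^n`). -/
def KT : Subalgebra K (Y K r n q) := Algebra.adjoin K (Set.range (t K r n q))

/-- The Laurent polynomial subalgebra `P_n^K` generated by `X_1^{±1}, …, X_n^{±1}`. -/
def Pn (XU : Fin n → (Y K r n q)ˣ) : Subalgebra K (Y K r n q) :=
  Algebra.adjoin K
    ((Set.range fun j => ((XU j : (Y K r n q)ˣ) : Y K r n q)) ∪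
      (Set.range fun j => (((XU j)⁻¹ : (Y K r n q)ˣ) : Y K r n q)))

/-- The subalgebra `P_n^K(T)` generated by `t_1, …, t_n` and `X_1^{±1}, …, X_n^{±1}`. -/
def PT (XU : Fin n → (Y K r n q)ˣ) : Subalgebra K (Y K r n q) :=
  Algebra.adjoin K
    (Set.range (t K r n q) ∪
      (Set.range fun j => ((XU j : (Y K r n q)ˣ) : Y K r n q)) ∪
      (Set.range fun j => (((XU j)⁻¹ : (Y K r n q)ˣ) : Y K r n q)))

/-- The subalgebra of `Ŷ_{r,n}^K` generated by all `t_j`, all `X_j^{±1}`, and the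
`g_w` for `w` in a set `W` of permutations (e.g. a Young subgroup). -/
def Ysub (XU : Fin n → (Y K r n q)ˣ) (gw : Equiv.Perm (Fin n) → Y K r n q)
    (W : Set (Equiv.Perm (Fin n))) : Subalgebra K (Y K r n q) :=
  Algebra.adjoin K
    (Set.range (t K r n q) ∪
      (Set.range fun j => ((XU j : (Y K r n q)ˣ) : Y K r n q)) ∪
      (Set.range fun j => (((XU j)⁻¹ : (Y K r n q)ˣ) : Y K r n q)) ∪
      (gw '' W))

/-- The Young subgroup `S_μ` attached to a block function `c : Fin n → Fin r`
(for monotone `c`, this is the Young subgroup of the composition `μ` whose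
parts are the fiber sizes of `c`): permutations preserving the blocks. -/
def Smu (c : Fin n → Fin r) : Set (Equiv.Perm (Fin n)) :=
  {w : Equiv.Perm (Fin n) | ∀ j, c (w j) = c j}

/-- Permutations fixing all positions `≥ m` (the subgroup `S_m ⊆ S_n`). -/
def SFix (m : ℕ) : Set (Equiv.Perm (Fin n)) :=
  {w : Equiv.Perm (Fin n) | ∀ j : Fin n, m ≤ j.1 → w j = j}

/-! ### Isotypic components -/

section Modules

variable (M : Type) [AddCommGroup M] [Module K M] [Module (Y K r n q) M]
  [IsScalarTower K (Y K r n q) M]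

/-- The `V(μ)`-isotypic component of `M` as a `KT`-module: since `V(μ)` is the
one-dimensional `KT`-module on which `t_j` acts by the scalar `ζ^{c j}`, this is
the simultaneous eigenspace. Here `ζ` is a primitive `r`-th root of unity and
the simple `K(ℤ/rℤ)`-modules are `V_k : t ↦ ζ^{k}`, `k : Fin r`. -/
def Imu (ζ : K) (c : Fin n → Fin r) : Submodule K M where
  carrier := {m : M | ∀ j : Fin n, t K r n q j • m = ζ ^ ((c j : ℕ)) • m}
  add_mem' := by
    intro a b ha hb
    intro j
    rw [smul_add, ha j, hb j, smul_add]
  zero_mem' := by intro j; simp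
  smul_mem' := by
    intro k m hm
    intro j
    rw [smul_comm, hm j, smul_comm]

/-- `M_μ := ∑_{w ∈ S_n} g_w (I_μ M)`. -/
def Mmu (ζ : K) (c : Fin n → Fin r) (gw : Equiv.Perm (Fin n) → Y K r n q) :
    Submodule K M :=
  Submodule.span K
    {x : M | ∃ w : Equiv.Perm (Fin n), ∃ m ∈ Imu K r n q M ζ c, x = gw w • m}

end Modules

/-! ### Affine Hecke algebras of type A (tensor-product form)

`HH K q n r c` is the tensor product `Ĥ_{μ_1}^K ⊗ ⋯ ⊗ Ĥ_{μ_r}^K` of affine Hecke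
algebras, presented globally: generators `T_i` for those adjacencies `i, i+1`
lying in a common block of `c : Fin n → Fin r`, and invertible `Y_j` for all
`j`.  (For `r = 1` and `c` constant this is the affine Hecke algebra `Ĥ_n^K`.) -/

inductive HGen (n r : ℕ) (c : Fin n → Fin r) : Type
  | T (i : ℕ) (h : i + 1 < n) (hc : c ⟨i, by omega⟩ = c ⟨i + 1, h⟩) : HGen n r c
  | Y (j : Fin n) : HGen n r c
  | Yinv (j : Fin n) : HGen n r c

end YH

namespace YH

variable (K : Type) [Field K] (q : K) {n r : ℕ}

abbrev FH (c : Fin n → Fin r) := FreeAlgebra K (HGen n r c)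

def TFh (c : Fin n → Fin r) (i : ℕ) (h : i + 1 < n)
    (hc : c ⟨i, by omega⟩ = c ⟨i + 1, h⟩) : FH K c :=
  FreeAlgebra.ι K (HGen.T i h hc)
def YFh (c : Fin n → Fin r) (j : Fin n) : FH K c := FreeAlgebra.ι K (HGen.Y j)
def YinvFh (c : Fin n → Fin r) (j : Fin n) : FH K c := FreeAlgebra.ι K (HGen.Yinv j)

/-- Defining relations of the (tensor product of) affine Hecke algebra(s). -/
inductive HRel (c : Fin n → Fin r) : FH K c → FH K c → Prop
  | quad {i : ℕ} (h : i + 1 < n) (hc : c ⟨i, by omega⟩ = c ⟨i + 1, h⟩) :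
      HRel c ((TFh K c i h hc - algebraMap K (FH K c) q) *
          (TFh K c i h hc + algebraMap K (FH K c) q⁻¹)) 0
  | braid {i : ℕ} (h : i + 2 < n)
      (hc1 : c ⟨i, by omega⟩ = c ⟨i + 1, by omega⟩)
      (hc2 : c ⟨i + 1, by omega⟩ = c ⟨i + 2, h⟩) :
      HRel c
        (TFh K c i (by omega) hc1 * TFh K c (i + 1) (by omega) hc2 *
          TFh K c i (by omega) hc1)
        (TFh K c (i + 1) (by omega) hc2 * TFh K c i (by omega) hc1 *
          TFh K c (i + 1) (by omega) hc2)
  | TT {i j : ℕ} (hi : i + 1 < n) (hci : c ⟨i, by omega⟩ = c ⟨i + 1, hi⟩)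
      (hj : j + 1 < n) (hcj : c ⟨j, by omega⟩ = c ⟨j + 1, hj⟩)
      (hij : i + 2 ≤ j ∨ j + 2 ≤ i) :
      HRel c (TFh K c i hi hci * TFh K c j hj hcj)
        (TFh K c j hj hcj * TFh K c i hi hci)
  | YY (j k : Fin n) : HRel c (YFh K c j * YFh K c k) (YFh K c k * YFh K c j)
  | YYinv (j : Fin n) : HRel c (YFh K c j * YinvFh K c j) 1
  | YinvY (j : Fin n) : HRel c (YinvFh K c j * YFh K c j) 1
  | TYT {i : ℕ} (h : i + 1 < n) (hc : c ⟨i, by omega⟩ = c ⟨i + 1, h⟩) :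
      HRel c (TFh K c i h hc * YFh K c ⟨i, by omega⟩ * TFh K c i h hc)
        (YFh K c ⟨i + 1, h⟩)
  | TY {i : ℕ} (h : i + 1 < n) (hc : c ⟨i, by omega⟩ = c ⟨i + 1, h⟩)
      (j : Fin n) (hj1 : j.1 ≠ i) (hj2 : j.1 ≠ i + 1) :
      HRel c (TFh K c i h hc * YFh K c j) (YFh K c j * TFh K c i h hc)

/-- The algebra `Ĥ_{μ_1}^K ⊗ ⋯ ⊗ Ĥ_{μ_r}^K` (for `c` monotone with fiber sizes
`μ_k`); for `r = 1` it is the affine Hecke algebra `Ĥ_n^K` of type `A`. -/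
abbrev HH (c : Fin n → Fin r) := RingQuot (HRel K q c)

def mkH (c : Fin n → Fin r) : FH K c →ₐ[K] HH K q c := RingQuot.mkAlgHom K (HRel K q c)

/-- The generator `T_i` (for an adjacency internal to a block of `c`). -/
def Tg (c : Fin n → Fin r) (i : ℕ) (h : i + 1 < n)
    (hc : c ⟨i, by omega⟩ = c ⟨i + 1, h⟩) : HH K q c :=
  mkH K q c (TFh K c i h hc)
/-- The generator `Y_j`. -/
def Yg (c : Fin n → Fin r) (j : Fin n) : HH K q c := mkH K q c (YFh K c j)
/-- The generator `Y_j^{-1}`. -/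
def Yinvg (c : Fin n → Fin r) (j : Fin n) : HH K q c := mkH K q c (YinvFh K c j)

end YH

namespace YH

variable (K : Type) [Field K] (r n : ℕ) (q : K)

/-! ### Actions and induced modules -/

/-- The action of an algebra `R` on a module `M` as an algebra homomorphism
`R →ₐ[K] End_K(M)`. -/
def actHom (R : Type) [Ring R] [Algebra K R] (M : Type) [AddCommGroup M] [Module K M]
    [Module R M] [IsScalarTower K R M] : R →ₐ[K] Module.End K M where
  toFun a :=
    { toFun := fun m => a • m
      map_add' := fun x y => smul_add a x y
      map_smul' := fun k m => (smul_comm k a m).symm }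
  map_one' := by ext m; exact one_smul R m
  map_mul' a b := by ext m; exact mul_smul a b m
  map_zero' := by ext m; exact zero_smul R m
  map_add' a b := by ext m; exact add_smul a b m
  commutes' k := by
    ext m
    simp [Module.algebraMap_end_apply, algebraMap_smul]

/-- A `K`-space `P` with action `ρ` of an algebra `R` is "simple" if it is
nonzero and has no proper nonzero `ρ`-stable subspace. -/
def SimpleVia {R : Type} [Ring R] [Algebra K R] {P : Type} [AddCommGroup P] [Module K P]
    (ρ : R →ₐ[K] Module.End K P) : Prop :=
  Nontrivial P ∧
    ∀ Q : Submodule K P, (∀ h : R, ∀ v ∈ Q, ρ h v ∈ Q) → Q = ⊥ ∨ Q = ⊤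

/-- The additive group structure on `Ŷ_{r,n}^K ⊗_K P` (Mathlib's
`TensorProduct.addCommGroup`, stated explicitly so that instance search finds it). -/
instance instAddCommGroupYTensor (P : Type) [AddCommGroup P] [Module K P] :
    AddCommGroup (Y K r n q ⊗[K] P) :=
  TensorProduct.addCommGroup

/-- The relation submodule defining the induced module
`Ŷ_{r,n}^K ⊗_{Ŷ_{r,μ}^K} (V(μ) ⊗ P)`, where `P` is a module over
`Ĥ_{μ_1}^K ⊗ ⋯ ⊗ Ĥ_{μ_r}^K` (given by `ρ`), and `V(μ)` is the one-dimensional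
`KT`-module attached to `c` (and a primitive `r`-th root of unity `ζ`):
we quotient `Ŷ_{r,n}^K ⊗_K P` by the `Ŷ`-span of the relations
`t_j ⊗ p = ζ^{c j} (1 ⊗ p)`, `g_i ⊗ p = 1 ⊗ T_i p` (`i` internal), and
`X_j ⊗ p = 1 ⊗ Y_j p`. -/
def IndRel (ζ : K) (c : Fin n → Fin r) (P : Type) [AddCommGroup P] [Module K P]
    (ρ : HH K q c →ₐ[K] Module.End K P) :
    Submodule (Y K r n q) (Y K r n q ⊗[K] P) :=
  Submodule.span (Y K r n q)
    ({z : Y K r n q ⊗[K] P | ∃ (j : Fin n) (p : P),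
        z = t K r n q j ⊗ₜ[K] p - (1 : Y K r n q) ⊗ₜ[K] (ζ ^ ((c j : ℕ)) • p)} ∪
      {z | ∃ (i : ℕ) (hi : i + 1 < n) (hc : c ⟨i, by omega⟩ = c ⟨i + 1, hi⟩) (p : P),
        z = g K r n q i hi ⊗ₜ[K] p - (1 : Y K r n q) ⊗ₜ[K] (ρ (Tg K q c i hi hc) p)} ∪
      {z | ∃ (j : Fin n) (p : P),
        z = X K r n q j ⊗ₜ[K] p - (1 : Y K r n q) ⊗ₜ[K] (ρ (Yg K q c j) p)})

/-- The induced `Ŷ_{r,n}^K`-module `S_μ(L.) = Ŷ_{r,n}^K ⊗_{Ŷ_{r,μ}^K} (V(μ) ⊗ P)`. -/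
def Ind (ζ : K) (c : Fin n → Fin r) (P : Type) [AddCommGroup P] [Module K P]
    (ρ : HH K q c →ₐ[K] Module.End K P) : Type :=
  (Y K r n q ⊗[K] P) ⧸ IndRel K r n q ζ c P ρ

instance (ζ : K) (c : Fin n → Fin r) (P : Type) [AddCommGroup P] [Module K P]
    (ρ : HH K q c →ₐ[K] Module.End K P) : AddCommGroup (Ind K r n q ζ c P ρ) :=
  inferInstanceAs (AddCommGroup ((Y K r n q ⊗[K] P) ⧸ IndRel K r n q ζ c P ρ))

instance (ζ : K) (c : Fin n → Fin r) (P : Type) [AddCommGroup P] [Module K P]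
    (ρ : HH K q c →ₐ[K] Module.End K P) : Module (Y K r n q) (Ind K r n q ζ c P ρ) :=
  inferInstanceAs (Module (Y K r n q) ((Y K r n q ⊗[K] P) ⧸ IndRel K r n q ζ c P ρ))

/-- The map skipping position `p`: `j ↦ j` if `j < p`, else `j ↦ j+1`
(the order embedding `Fin (n-1) → Fin n` avoiding `p`). -/
def skipIns (p : ℕ) (j : Fin (n - 1)) : Fin n :=
  if j.1 < p then ⟨j.1, by have := j.2; omega⟩ else ⟨j.1 + 1, by have := j.2; omega⟩

end YH

/-!
The `t_j` commute with `X_1` and are permuted by the `g_i` (`g_i t_j = t_{s_i(j)} g_i`), so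
they commute with every `X_j` and `g_w t_j = t_{w(j)} g_w`. A vector on which each `t_j` acts by
`ζ^{c(j)}` is therefore sent by `X_j` to another such vector, and by `g_w` as well as soon as
`w` preserves the fibres of `c`, i.e. `w ∈ S_μ`. Since `V(μ)` is one-dimensional, a
`KT`-homomorphism `V(μ) → I_μN` is determined by the image of `v_μ`, which can be any vector
of `I_μN`.
-/

namespace YH

variable {K : Type} [Field K] {r n : ℕ} {q : K}

section Words

lemma permOfWord_append (l l' : Word n) :
    permOfWord n (l ++ l') = permOfWord n l * permOfWord n l' := by
  simp [permOfWord]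

lemma exists_permOfWord_eq (w : Equiv.Perm (Fin n)) : ∃ l : Word n, permOfWord n l = w := by
  rcases n with _ | m
  · exact ⟨[], Subsingleton.elim _ _⟩
  have hw : w ∈ Submonoid.closure (Set.range fun i : Fin m => Equiv.swap i.castSucc i.succ) := by
    rw [Equiv.Perm.mclosure_swap_castSucc_succ]
    trivial
  induction hw using Submonoid.closure_induction with
  | mem _ hx =>
    obtain ⟨i, rfl⟩ := hx
    exact ⟨[⟨i, by omega⟩], by simp [permOfWord, swapi]; rfl⟩
  | one => exact ⟨[], rfl⟩
  | mul _ _ _ _ h₁ h₂ =>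
    obtain ⟨l₁, rfl⟩ := h₁
    obtain ⟨l₂, rfl⟩ := h₂
    exact ⟨l₁ ++ l₂, permOfWord_append l₁ l₂⟩

lemma exists_isReducedWord (w : Equiv.Perm (Fin n)) : ∃ l : Word n, IsReducedWord n l w := by
  obtain ⟨l, hl, hmin⟩ :=
    (measure List.length).wf.has_min {l | permOfWord n l = w} (exists_permOfWord_eq w)
  exact ⟨l, hl, fun l' hl' => not_lt.1 (hmin l' hl')⟩

end Words

section Commutation

lemma g_mul_t (i : ℕ) (h : i + 1 < n) (j : Fin n) :
    g K r n q i h * t K r n q j = t K r n q (swapi n i h j) * g K r n q i h := by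
  simpa only [g, t, mkY, map_mul] using
    RingQuot.mkAlgHom_rel K (YRel.gt (K := K) (r := r) (q := q) h j)

lemma t_mul_g (i : ℕ) (h : i + 1 < n) (j : Fin n) :
    t K r n q j * g K r n q i h = g K r n q i h * t K r n q (swapi n i h j) := by
  rw [g_mul_t, swapi, Equiv.swap_apply_self]

lemma t_mul_gword (l : Word n) (j : Fin n) :
    t K r n q j * gword K r n q l = gword K r n q l * t K r n q ((permOfWord n l)⁻¹ j) := by
  induction l generalizing j with
  | nil => simp [gword, permOfWord]
  | cons a l ih =>
    have hinv : (permOfWord n (a :: l))⁻¹ j = (permOfWord n l)⁻¹ (swapi n a.1 a.2 j) := by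
      simp [permOfWord, swapi, Equiv.swap_inv]
    simp only [gword, List.map_cons, List.prod_cons] at ih ⊢
    rw [hinv, ← mul_assoc, t_mul_g, mul_assoc, ih, ← mul_assoc]

lemma t_mul_X1 (j : Fin n) : t K r n q j * X1 K r n q = X1 K r n q * t K r n q j := by
  simpa only [t, X1, mkY, map_mul] using
    RingQuot.mkAlgHom_rel K (YRel.tX (K := K) (r := r) (q := q) j)

lemma t_mul_Xrec (k : ℕ) (hk : k < n) (j : Fin n) :
    t K r n q j * Xrec K r n q k hk = Xrec K r n q k hk * t K r n q j := by
  induction k generalizing j with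
  | zero => exact t_mul_X1 j
  | succ k ih =>
    simp only [Xrec, mul_assoc]
    rw [← mul_assoc, t_mul_g, mul_assoc, ← mul_assoc (t K r n q _), ih,
      mul_assoc (Xrec K r n q k _), t_mul_g, swapi, Equiv.swap_apply_self]

lemma t_mul_X (j k : Fin n) : t K r n q k * X K r n q j = X K r n q j * t K r n q k :=
  t_mul_Xrec j.1 j.2 k

end Commutation

section Isotypic

variable {M : Type} [AddCommGroup M] [Module K M] [Module (Y K r n q) M]
  [IsScalarTower K (Y K r n q) M] {ζ : K} {c : Fin n → Fin r}

lemma smul_mem_Imu_of_t_mul {a : Y K r n q} {σ : Fin n → Fin n} (hσ : ∀ j, c (σ j) = c j)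
    (ha : ∀ j, t K r n q j * a = a * t K r n q (σ j)) {m : M}
    (hm : m ∈ Imu K r n q M ζ c) : a • m ∈ Imu K r n q M ζ c := by
  intro j
  rw [← mul_smul, ha, mul_smul, hm (σ j), smul_comm, hσ]

lemma gw_smul_mem_Imu {gw : Equiv.Perm (Fin n) → Y K r n q} (hgw : GwSpec K r n q gw)
    {w : Equiv.Perm (Fin n)} (hw : w ∈ Smu r n c) {m : M} (hm : m ∈ Imu K r n q M ζ c) :
    gw w • m ∈ Imu K r n q M ζ c := by
  obtain ⟨l, hl⟩ := exists_isReducedWord w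
  rw [hgw w l hl]
  refine smul_mem_Imu_of_t_mul (σ := ⇑w⁻¹) (fun j => ?_) (fun j => ?_) hm
  · simpa using (hw (w⁻¹ j)).symm
  · rw [t_mul_gword, hl.1]

lemma X_smul_mem_Imu (j : Fin n) {m : M} (hm : m ∈ Imu K r n q M ζ c) :
    X K r n q j • m ∈ Imu K r n q M ζ c :=
  smul_mem_Imu_of_t_mul (σ := id) (fun _ => rfl) (t_mul_X j) hm

end Isotypic

end YH

lemma Submodule.image_apply_one_setOf_forall_mem {R M : Type*} [CommSemiring R]
    [AddCommMonoid M] [Module R M] (S : Submodule R M) :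
    (fun F : R →ₗ[R] M => F 1) '' {F | ∀ v, F v ∈ S} = S := by
  ext x
  refine ⟨fun ⟨F, hF, hx⟩ => hx ▸ hF 1, fun hx => ⟨LinearMap.toSpanSingleton R M x, ?_, by simp⟩⟩
  intro v
  simpa using S.smul_mem v hx

theorem statement9_general (K : Type) [Field K] (r n : ℕ) (q : K) (ζ : K)
    (gw : Equiv.Perm (Fin n) → YH.Y K r n q) (hgw : YH.GwSpec K r n q gw)
    (c : Fin n → Fin r)
    (N : Type) [AddCommGroup N] [Module K N] [Module (YH.Y K r n q) N]
    [IsScalarTower K (YH.Y K r n q) N] :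
    (∀ w ∈ YH.Smu r n c, ∀ F : K →ₗ[K] N, (∀ v, F v ∈ YH.Imu K r n q N ζ c) →
        ∀ v : K, gw w • F v ∈ YH.Imu K r n q N ζ c) ∧
    (∀ (j : Fin n) (F : K →ₗ[K] N), (∀ v, F v ∈ YH.Imu K r n q N ζ c) →
        ∀ v : K, YH.X K r n q j • F v ∈ YH.Imu K r n q N ζ c) ∧
    (∀ F : K →ₗ[K] N, (∀ v, F v ∈ YH.Imu K r n q N ζ c) →
        ∀ j : Fin n, YH.t K r n q j • F 1 = ζ ^ ((c j : ℕ)) • F 1) ∧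
    Set.InjOn (fun F : K →ₗ[K] N => F 1)
      {F : K →ₗ[K] N | ∀ v, F v ∈ YH.Imu K r n q N ζ c} ∧
    (fun F : K →ₗ[K] N => F 1) '' {F : K →ₗ[K] N | ∀ v, F v ∈ YH.Imu K r n q N ζ c} =
      ↑(YH.Imu K r n q N ζ c) :=
  ⟨fun _ hw _ hF v => YH.gw_smul_mem_Imu hgw hw (hF v),
    fun j _ hF v => YH.X_smul_mem_Imu j (hF v),
    fun _ hF => hF 1,
    fun _ _ _ _ h => LinearMap.ext_ring h,
    Submodule.image_apply_one_setOf_forall_mem _⟩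

/-- Proposition 3.6 of the paper: for a finite-dimensional
`Ŷ_{r,n}^K`-module `N` and `μ ∈ C_r(n)` (monotone block function `c`), the
evaluation map `Ψ : V(μ) ⊗ Hom_{KT}(V(μ), I_μN) → I_μN`, `v ⊗ ψ ↦ ψ(v)` is an
isomorphism of `Ŷ_{r,μ}^K`-modules.  Here `Hom_{KT}(V(μ), I_μN)` is identified
with `{F : K →ₗ[K] N | ∀ v, F v ∈ I_μN}` (`V(μ) = K v_μ` is one-dimensional),
carrying the action `(T_w ⋄ ψ)(v_μ) = g_w ψ(v_μ)`, `(Y_j^{±1} ⋄ ψ)(v_μ) =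
X_j^{±1} ψ(v_μ)`, which is well defined by the first two clauses; `Ψ` is the
`t`-equivariant (third clause) bijection `F ↦ F(1)` onto `I_μN` (last clauses). -/
theorem statement9 (K : Type) [Field K] [IsAlgClosed K] (r n : ℕ) (hr : 0 < r) (hn : 0 < n)
    (hrK : (r : K) ≠ 0) (q : K) (hq : q ≠ 0)
    (ζ : K) (hζ : IsPrimitiveRoot ζ r)
    (XU : Fin n → (YH.Y K r n q)ˣ) (hXU : YH.XUSpec K r n q XU)
    (gw : Equiv.Perm (Fin n) → YH.Y K r n q) (hgw : YH.GwSpec K r n q gw)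
    (c : Fin n → Fin r) (hc : Monotone c)
    (N : Type) [AddCommGroup N] [Module K N] [Module (YH.Y K r n q) N]
    [IsScalarTower K (YH.Y K r n q) N] [FiniteDimensional K N] :
    (∀ w ∈ YH.Smu r n c, ∀ F : K →ₗ[K] N, (∀ v, F v ∈ YH.Imu K r n q N ζ c) →
        ∀ v : K, gw w • F v ∈ YH.Imu K r n q N ζ c) ∧
    (∀ (j : Fin n) (F : K →ₗ[K] N), (∀ v, F v ∈ YH.Imu K r n q N ζ c) →
        ∀ v : K, YH.X K r n q j • F v ∈ YH.Imu K r n q N ζ c) ∧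
    (∀ F : K →ₗ[K] N, (∀ v, F v ∈ YH.Imu K r n q N ζ c) →
        ∀ j : Fin n, YH.t K r n q j • F 1 = ζ ^ ((c j : ℕ)) • F 1) ∧
    Set.InjOn (fun F : K →ₗ[K] N => F 1)
      {F : K →ₗ[K] N | ∀ v, F v ∈ YH.Imu K r n q N ζ c} ∧
    (fun F : K →ₗ[K] N => F 1) '' {F : K →ₗ[K] N | ∀ v, F v ∈ YH.Imu K r n q N ζ c} =
      ↑(YH.Imu K r n q N ζ c) :=
  statement9_general K r n q ζ gw hgw c N
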